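/- (Inequality part of Corollary 3.1.) Let n ≥ 1 and let F : 𝒦ⁿ → [0,∞) be positively homogeneous, increasing and concave, and let p ∈ (1,∞). Then for all K, L ∈ 𝒦ⁿₒ, F(K +_p L)^p ≥ F(K)^p + F(L)^p. -/

import Mathlib

/-!
With `q` the conjugate exponent, Hölder's inequality applied to the support functions gives
`a • K + b • L ⊆ (a^q + b^q)^(1/q) • M` for all `a, b ≥ 0`. A concave, positively homogeneous
`F` is superadditive, so `a F(K) + b F(L) ≤ (a^q + b^q)^(1/q) F(M)`, and the choice
`(a, b) = (F(K)^(p-1), F(L)^(p-1))` turns this into `(F(K)^p + F(L)^p)^(1/p) ≤ F(M)`.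
If `F(K)` or `F(L)` vanishes, the cases `(a, b) = (1, 0), (0, 1)`, i.e. `K, L ⊆ M`, suffice.
-/

open scoped Pointwise RealInnerProductSpace

/-- A convex body in `ℝⁿ`: a compact convex set with nonempty interior. -/
def IsConvexBody {n : ℕ} (K : Set (EuclideanSpace ℝ (Fin n))) : Prop :=
  IsCompact K ∧ Convex ℝ K ∧ (interior K).Nonempty

/-- A convex body containing the origin in its interior. -/
def IsConvexBodyO {n : ℕ} (K : Set (EuclideanSpace ℝ (Fin n))) : Prop :=
  IsCompact K ∧ Convex ℝ K ∧ (0 : EuclideanSpace ℝ (Fin n)) ∈ interior K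

/-- The support function of a set: `h_K(u) = sup { ⟪x, u⟫ : x ∈ K }`. -/
noncomputable def supp {n : ℕ} (K : Set (EuclideanSpace ℝ (Fin n)))
    (u : EuclideanSpace ℝ (Fin n)) : ℝ :=
  sSup ((fun x => ⟪x, u⟫) '' K)

section SupportFunction

variable {n : ℕ} {K L M : Set (EuclideanSpace ℝ (Fin n))}

lemma supp_eq_sSup_image_innerSL (K : Set (EuclideanSpace ℝ (Fin n)))
    (u : EuclideanSpace ℝ (Fin n)) : supp K u = sSup (innerSL ℝ u '' K) := by
  simp only [supp, real_inner_comm]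
  rfl

lemma le_supp (hK : IsCompact K) {x : EuclideanSpace ℝ (Fin n)} (hx : x ∈ K)
    (u : EuclideanSpace ℝ (Fin n)) : ⟪x, u⟫ ≤ supp K u :=
  le_csSup ((hK.image (continuous_id.inner continuous_const)).bddAbove) ⟨x, hx, rfl⟩

lemma supp_le (hK : K.Nonempty) {u : EuclideanSpace ℝ (Fin n)} {r : ℝ}
    (h : ∀ x ∈ K, ⟪x, u⟫ ≤ r) : supp K u ≤ r :=
  csSup_le (hK.image _) (Set.forall_mem_image.mpr h)

lemma supp_nonneg (hK : IsCompact K) (hK0 : 0 ∈ K) (u : EuclideanSpace ℝ (Fin n)) :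
    0 ≤ supp K u := by
  simpa using le_supp hK hK0 u

lemma supp_smul (K : Set (EuclideanSpace ℝ (Fin n))) {c : ℝ} (hc : 0 ≤ c)
    (u : EuclideanSpace ℝ (Fin n)) : supp (c • K) u = c * supp K u := by
  rw [supp_eq_sSup_image_innerSL, supp_eq_sSup_image_innerSL, image_smul_set,
    Real.sSup_smul_of_nonneg hc, smul_eq_mul]

lemma supp_add (hK : IsCompact K) (hL : IsCompact L) (hKne : K.Nonempty) (hLne : L.Nonempty)
    (u : EuclideanSpace ℝ (Fin n)) : supp (K + L) u = supp K u + supp L u := by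
  simp only [supp_eq_sSup_image_innerSL, Set.image_add]
  exact csSup_add (hKne.image _) (hK.image (innerSL ℝ u).continuous).bddAbove
    (hLne.image _) (hL.image (innerSL ℝ u).continuous).bddAbove

lemma supp_smul_right (K : Set (EuclideanSpace ℝ (Fin n))) {c : ℝ} (hc : 0 ≤ c)
    (u : EuclideanSpace ℝ (Fin n)) : supp K (c • u) = c * supp K u := by
  rw [supp, supp, ← smul_eq_mul, ← Real.sSup_smul_of_nonneg hc, ← Set.image_smul,
    Set.image_image]
  simp only [inner_smul_right, smul_eq_mul]

lemma supp_le_supp_of_forall_norm_eq_one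
    (h : ∀ u : EuclideanSpace ℝ (Fin n), ‖u‖ = 1 → supp K u ≤ supp M u)
    (v : EuclideanSpace ℝ (Fin n)) : supp K v ≤ supp M v := by
  rcases eq_or_ne v 0 with rfl | hv
  · rw [← zero_smul ℝ (0 : EuclideanSpace ℝ (Fin n)), supp_smul_right K le_rfl,
      supp_smul_right M le_rfl, zero_mul, zero_mul]
  · rw [← smul_inv_smul₀ (norm_ne_zero_iff.mpr hv) v, supp_smul_right K (norm_nonneg v),
      supp_smul_right M (norm_nonneg v)]
    exact mul_le_mul_of_nonneg_left (h _ (norm_smul_inv_norm hv)) (norm_nonneg v)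

lemma subset_of_supp_le_supp (hK : IsCompact K) (hM : IsClosed M) (hMc : Convex ℝ M)
    (hMne : M.Nonempty)
    (h : ∀ u : EuclideanSpace ℝ (Fin n), ‖u‖ = 1 → supp K u ≤ supp M u) : K ⊆ M := by
  intro x hx
  by_contra hxM
  obtain ⟨f, s, hfM, hfx⟩ := geometric_hahn_banach_closed_point hMc hM hxM
  set v := (InnerProductSpace.toDual ℝ (EuclideanSpace ℝ (Fin n))).symm f
  have hf : ∀ y, f y = ⟪y, v⟫ := fun y => by
    rw [real_inner_comm, InnerProductSpace.toDual_symm_apply]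
  have hMs : supp M v ≤ s := supp_le hMne fun y hy => (hf y ▸ hfM y hy).le
  linarith [le_supp hK hx v, supp_le_supp_of_forall_norm_eq_one h v, hf x]

end SupportFunction

section ConvexBody

variable {n : ℕ} {K L : Set (EuclideanSpace ℝ (Fin n))}

lemma IsConvexBodyO.isConvexBody (hK : IsConvexBodyO K) : IsConvexBody K :=
  ⟨hK.1, hK.2.1, 0, hK.2.2⟩

lemma IsConvexBodyO.zero_mem (hK : IsConvexBodyO K) : 0 ∈ K :=
  interior_subset hK.2.2

lemma IsConvexBody.smul (hK : IsConvexBody K) {c : ℝ} (hc : 0 < c) : IsConvexBody (c • K) :=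
  ⟨hK.1.smul c, hK.2.1.smul c, by rw [interior_smul₀ hc.ne']; exact hK.2.2.smul_set⟩

lemma IsConvexBody.add (hK : IsConvexBody K) (hL : IsConvexBody L) : IsConvexBody (K + L) :=
  ⟨hK.1.add hL.1, hK.2.1.add hL.2.1, (hK.2.2.add hL.2.2).mono subset_interior_add⟩

end ConvexBody

theorem smul_add_smul_subset_of_supp_rpow_eq {n : ℕ} {p q : ℝ} (hpq : p.HolderConjugate q)
    {K L M : Set (EuclideanSpace ℝ (Fin n))}
    (hK : IsConvexBodyO K) (hL : IsConvexBodyO L) (hM : IsConvexBodyO M)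
    (hMsupp : ∀ u : EuclideanSpace ℝ (Fin n), ‖u‖ = 1 →
      supp M u ^ p = supp K u ^ p + supp L u ^ p)
    {a b : ℝ} (ha : 0 ≤ a) (hb : 0 ≤ b) :
    a • K + b • L ⊆ (a ^ q + b ^ q) ^ (1 / q) • M := by
  have hc : 0 ≤ (a ^ q + b ^ q) ^ (1 / q) := by positivity
  refine subset_of_supp_le_supp ((hK.1.smul a).add (hL.1.smul b)) (hM.1.smul _).isClosed
    (hM.2.1.smul _) (Set.nonempty_of_mem hM.zero_mem).smul_set fun u hu => ?_
  have hK0 := supp_nonneg hK.1 hK.zero_mem u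
  have hL0 := supp_nonneg hL.1 hL.zero_mem u
  have hholder := Real.inner_le_Lp_mul_Lq_of_nonneg Finset.univ (f := ![a, b])
    (g := ![supp K u, supp L u]) hpq.symm (by simp [Fin.forall_fin_two, ha, hb])
    (by simp [Fin.forall_fin_two, hK0, hL0])
  simp only [Fin.sum_univ_two, Matrix.cons_val_zero, Matrix.cons_val_one] at hholder
  rw [← hMsupp u hu, one_div p, Real.rpow_rpow_inv (supp_nonneg hM.1 hM.zero_mem u)
    hpq.ne_zero] at hholder
  rwa [supp_add (hK.1.smul a) (hL.1.smul b) (Set.nonempty_of_mem hK.zero_mem).smul_set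
    (Set.nonempty_of_mem hL.zero_mem).smul_set, supp_smul K ha, supp_smul L hb, supp_smul M hc]

lemma rpow_add_rpow_le_rpow_of_forall_mul_add_mul_le {p q x y m : ℝ} (hpq : p.HolderConjugate q)
    (hx : 0 ≤ x) (hy : 0 ≤ y) (hxm : x ≤ m) (hym : y ≤ m)
    (h : ∀ a b : ℝ, 0 < a → 0 < b → a * x + b * y ≤ (a ^ q + b ^ q) ^ (1 / q) * m) :
    x ^ p + y ^ p ≤ m ^ p := by
  rcases hx.eq_or_lt with rfl | hx
  · simpa [Real.zero_rpow hpq.ne_zero] using Real.rpow_le_rpow hy hym hpq.nonneg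
  rcases hy.eq_or_lt with rfl | hy
  · simpa [Real.zero_rpow hpq.ne_zero] using Real.rpow_le_rpow hx.le hxm hpq.nonneg
  have hpair : ∀ z : ℝ, 0 < z → z ^ (p - 1) * z = z ^ p := fun z hz => by
    rw [← Real.rpow_add_one hz.ne', sub_add_cancel]
  have hpow : ∀ z : ℝ, 0 < z → (z ^ (p - 1)) ^ q = z ^ p := fun z hz => by
    rw [← Real.rpow_mul hz.le, hpq.sub_one_mul_conj]
  set s := x ^ p + y ^ p
  have hs : 0 < s := by positivity
  have hsq : s ≤ s ^ (1 / q) * m := by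
    simpa only [hpair x hx, hpair y hy, hpow x hx, hpow y hy] using
      h (x ^ (p - 1)) (y ^ (p - 1)) (Real.rpow_pos_of_pos hx _) (Real.rpow_pos_of_pos hy _)
  have hsplit : s ^ (1 / p) * s ^ (1 / q) = s := by
    rw [← Real.rpow_add hs, one_div, one_div, hpq.inv_add_inv_eq_one, Real.rpow_one]
  have hsp : s ^ (1 / p) ≤ m :=
    le_of_mul_le_mul_right (by rwa [hsplit, mul_comm]) (Real.rpow_pos_of_pos hs _)
  calc s = (s ^ (1 / p)) ^ p := by
        rw [← Real.rpow_mul hs.le, one_div_mul_cancel hpq.ne_zero, Real.rpow_one]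
    _ ≤ m ^ p := Real.rpow_le_rpow (by positivity) hsp hpq.nonneg

lemma add_le_of_concave_of_homogeneous {n : ℕ} (F : Set (EuclideanSpace ℝ (Fin n)) → ℝ)
    (hFhom : ∀ c : ℝ, 0 < c → ∀ K, IsConvexBody K → F (c • K) = c * F K)
    (hFconc : ∀ K L, IsConvexBody K → IsConvexBody L → ∀ α : ℝ, α ∈ Set.Ioo (0 : ℝ) 1 →
      (1 - α) * F K + α * F L ≤ F ((1 - α) • K + α • L))
    {K L : Set (EuclideanSpace ℝ (Fin n))} (hK : IsConvexBody K) (hL : IsConvexBody L) :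
    F K + F L ≤ F (K + L) := by
  have hmid := hFconc K L hK hL 2⁻¹ ⟨by norm_num, by norm_num⟩
  rw [show (1 - 2⁻¹ : ℝ) = 2⁻¹ by norm_num] at hmid
  have hsum : K + L = (2 : ℝ) • ((2⁻¹ : ℝ) • K + (2⁻¹ : ℝ) • L) := by
    rw [smul_add, smul_smul, smul_smul, mul_inv_cancel₀ two_ne_zero, one_smul, one_smul]
  rw [hsum, hFhom 2 two_pos _ ((hK.smul (by norm_num)).add (hL.smul (by norm_num)))]
  linarith

theorem lp_transference_sum_inequality_general {n : ℕ}
    (F : Set (EuclideanSpace ℝ (Fin n)) → ℝ)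
    (hF0 : ∀ K, IsConvexBody K → 0 ≤ F K)
    (hFhom : ∀ c : ℝ, 0 < c → ∀ K, IsConvexBody K → F (c • K) = c * F K)
    (hFmono : ∀ K L, IsConvexBody K → IsConvexBody L → K ⊆ L → F K ≤ F L)
    (hFconc : ∀ K L, IsConvexBody K → IsConvexBody L → ∀ α : ℝ, α ∈ Set.Ioo (0:ℝ) 1 →
      (1 - α) * F K + α * F L ≤ F ((1 - α) • K + α • L))
    (p : ℝ) (hp : 1 < p)
    (K L M : Set (EuclideanSpace ℝ (Fin n)))
    (hK : IsConvexBodyO K) (hL : IsConvexBodyO L) (hM : IsConvexBodyO M)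
    (hMsupp : ∀ u : EuclideanSpace ℝ (Fin n), ‖u‖ = 1 →
      supp M u ^ p = supp K u ^ p + supp L u ^ p) :
    F K ^ p + F L ^ p ≤ F M ^ p := by
  set q := p.conjExponent
  have hpq : p.HolderConjugate q := .conjExponent hp
  have hsub {a b : ℝ} (ha : 0 ≤ a) (hb : 0 ≤ b) :=
    smul_add_smul_subset_of_supp_rpow_eq hpq hK hL hM hMsupp ha hb
  have hq0 : (0 : ℝ) ^ q = 0 := Real.zero_rpow hpq.symm.ne_zero
  have hKM : K ⊆ M := by
    simpa [hq0, Set.zero_smul_set (Set.nonempty_of_mem hL.zero_mem)] using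
      hsub zero_le_one le_rfl
  have hLM : L ⊆ M := by
    simpa [hq0, Set.zero_smul_set (Set.nonempty_of_mem hK.zero_mem)] using
      hsub le_rfl zero_le_one
  have hKb := hK.isConvexBody
  have hLb := hL.isConvexBody
  have hMb := hM.isConvexBody
  refine rpow_add_rpow_le_rpow_of_forall_mul_add_mul_le hpq (hF0 K hKb) (hF0 L hLb)
    (hFmono K M hKb hMb hKM) (hFmono L M hLb hMb hLM) fun a b ha hb => ?_
  have hc : 0 < (a ^ q + b ^ q) ^ (1 / q) := by positivity
  calc a * F K + b * F L = F (a • K) + F (b • L) := by rw [hFhom a ha K hKb, hFhom b hb L hLb]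
    _ ≤ F (a • K + b • L) :=
        add_le_of_concave_of_homogeneous F hFhom hFconc (hKb.smul ha) (hLb.smul hb)
    _ ≤ F ((a ^ q + b ^ q) ^ (1 / q) • M) :=
        hFmono _ _ ((hKb.smul ha).add (hLb.smul hb)) (hMb.smul hc) (hsub ha.le hb.le)
    _ = (a ^ q + b ^ q) ^ (1 / q) * F M := hFhom _ hc M hMb

/-- Inequality part of Corollary 3.1.
If `F` is nonnegative, positively homogeneous, increasing and concave on convex bodies,
`1 < p < ∞`, `K, L ∈ 𝒦ⁿₒ`, and `M = K +_p L` is the convex body with origin in its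
interior whose support function satisfies `h_M^p = h_K^p + h_L^p` on the unit sphere,
then `F(M)^p ≥ F(K)^p + F(L)^p`. -/
theorem lp_transference_sum_inequality {n : ℕ} (hn : 1 ≤ n)
    (F : Set (EuclideanSpace ℝ (Fin n)) → ℝ)
    (hF0 : ∀ K, IsConvexBody K → 0 ≤ F K)
    (hFhom : ∀ c : ℝ, 0 < c → ∀ K, IsConvexBody K → F (c • K) = c * F K)
    (hFmono : ∀ K L, IsConvexBody K → IsConvexBody L → K ⊆ L → F K ≤ F L)
    (hFconc : ∀ K L, IsConvexBody K → IsConvexBody L → ∀ α : ℝ, α ∈ Set.Ioo (0:ℝ) 1 →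
      (1 - α) * F K + α * F L ≤ F ((1 - α) • K + α • L))
    (p : ℝ) (hp : 1 < p)
    (K L M : Set (EuclideanSpace ℝ (Fin n)))
    (hK : IsConvexBodyO K) (hL : IsConvexBodyO L) (hM : IsConvexBodyO M)
    (hMsupp : ∀ u : EuclideanSpace ℝ (Fin n), ‖u‖ = 1 →
      supp M u ^ p = supp K u ^ p + supp L u ^ p) :
    F K ^ p + F L ^ p ≤ F M ^ p :=
  lp_transference_sum_inequality_general F hF0 hFhom hFmono hFconc p hp K L M hK hL hM hMsupp
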